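/- arXiv:2304.11887 — 2 statements merged into one kernel-verified Lean document; each statement's English description precedes it below -/
import Mathlib

section
/- (Flux of a rigid field through a power-cup graph over a half-disc.) Let α ∈ (0,1], k > 0, h ∈ ℝ, ρ > 0, γ ∈ ℝ, and let g(x') := h + k|x'|^{1+α} for x' = (x₁,x₂) ∈ ℝ². For all u_P = (u_{P1},u_{P2},u_{P3}) ∈ ℝ³ and ω = (ω₁,ω₂,ω₃) ∈ ℝ³, the rigid field u(x) := u_P + ω × (x − (0,0,h)) satisfies the exact identity: ∫_{D_{ρ,γ}} u(x', g(x')) · (−∂_{x₁}g(x'), −∂_{x₂}g(x'), 1) dx' = (π/2)ρ² u_{P3} + (2k(1+α)/(2+α)) ρ^{2+α} (u_{P1} sin γ − u_{P2} cos γ) + ( 2/3 + (2k²(1+α)/(2α+3)) ρ^{2α} ) ρ³ (ω₁ cos γ + ω₂ sin γ), where D_{ρ,γ} := {(r cos θ, r sin θ) : 0 < r < ρ, γ ≤ θ < π + γ} and the integral is the two-dimensional Lebesgue integral. -/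
noncomputable section

open MeasureTheory Real Set Filter
open scoped RealInnerProductSpace

/-- `ℝ³` with the Euclidean norm. -/
abbrev V3 : Type := EuclideanSpace ℝ (Fin 3)

/-- `ℝ²` with the Euclidean norm. -/
abbrev E2 : Type := EuclideanSpace ℝ (Fin 2)

/-- The point of `ℝ³` with coordinates `(a, b, c)`. -/
def mk3 (a b c : ℝ) : V3 := (WithLp.equiv 2 (Fin 3 → ℝ)).symm ![a, b, c]

/-- The point of `ℝ²` with coordinates `(a, b)`. -/
def mk2 (a b : ℝ) : E2 := (WithLp.equiv 2 (Fin 2 → ℝ)).symm ![a, b]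

/-- `|x'|`: the Euclidean norm of the horizontal part `(x₁, x₂)` of `x ∈ ℝ³`. -/
def pnorm (x : V3) : ℝ := Real.sqrt ((x 0) ^ 2 + (x 1) ^ 2)

/-- The cross product in `ℝ³`. -/
def cross3 (a b : V3) : V3 :=
  mk3 (a 1 * b 2 - a 2 * b 1) (a 2 * b 0 - a 0 * b 2) (a 0 * b 1 - a 1 * b 0)

/-- `div u = 0` almost everywhere (with `fderiv` the a.e. derivative of the
Lipschitz field `u`). -/
def DivFree (u : V3 → V3) : Prop :=
  ∀ᵐ x ∂(volume : Measure V3),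
    (∑ i : Fin 3, fderiv ℝ u x (EuclideanSpace.single i 1) i) = 0

/-- `u` is an admissible rigid-body field of class `W^{1,p}_0(S, Ω)` with rigid data
`(u_*, ω)` about the point `x_*`:  `u` is Lipschitz, vanishes outside `Ω`,
is divergence free a.e., and is the rigid field `u_* + ω × (x - x_*)` on `S`. -/
def RigidField (S Ω : Set V3) (u : V3 → V3) (ustar ω xstar : V3) : Prop :=
  (∃ L, LipschitzWith L u) ∧ (∀ x ∉ Ω, u x = 0) ∧ DivFree u ∧
    xstar ∈ closure S ∧ ∀ x ∈ S, u x = ustar + cross3 ω (x - xstar)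

/-- `‖∇u‖_{L^p(A)}`. -/
def gradLp (p : ℝ) (u : V3 → V3) (A : Set V3) : ℝ :=
  (∫ x in A, ‖fderiv ℝ u x‖ ^ p) ^ (1 / p)

/-- `‖∇²u‖_{L²(A)}`. -/
def grad2L2 (u : V3 → V3) (A : Set V3) : ℝ :=
  (∫ x in A, ‖iteratedFDeriv ℝ 2 u x‖ ^ (2 : ℝ)) ^ (1 / (2 : ℝ))

/-- The region `{k |x'|^{1+α} < |x₃| < k σ₀^{1+α}, |x'| < σ₀}` excluded from the
boundary in the definition of a uniformly `C^{1,α}` domain. -/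
def cuspRegion (k σ₀ α : ℝ) : Set V3 :=
  {x : V3 | k * pnorm x ^ (1 + α) < |x 2| ∧ |x 2| < k * σ₀ ^ (1 + α) ∧ pnorm x < σ₀}

/-- `D` is a uniformly `C^{1,α}` domain with constants `k`, `σ₀`. -/
def UnifC1alpha (D : Set V3) (α k σ₀ : ℝ) : Prop :=
  ∀ x₀ ∈ frontier D, ∃ R : V3 ≃ᵢ V3, R 0 = x₀ ∧
    (R '' cuspRegion k σ₀ α) ∩ frontier D = ∅

/-- The rigid vector field with translational velocity `uP` and angular velocity `ω`
about the point `(0,0,h)`. -/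
def rigidAt (uP ω : V3) (h : ℝ) (x : V3) : V3 := uP + cross3 ω (x - mk3 0 0 h)

/-- The half-disc `D_{ρ,γ} = {(r cos θ, r sin θ) : 0 < r < ρ, γ ≤ θ < π + γ} ⊆ ℝ²`. -/
def halfDisc (ρ γ : ℝ) : Set E2 :=
  {y : E2 | ∃ r θ : ℝ, 0 < r ∧ r < ρ ∧ γ ≤ θ ∧ θ < Real.pi + γ ∧
    y = mk2 (r * Real.cos θ) (r * Real.sin θ)}

/-! In polar coordinates `y = (r cos θ, r sin θ)` the gradient
`∇g(y) = k (1+α) r^α (cos θ, sin θ)` is radial, so the part `ω₃ (-y₂, y₁)` of the horizontal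
velocity does not contribute, and `ω₃` does not enter the vertical velocity `ω₁ y₂ - ω₂ y₁`.
Hence the Jacobian `r` times the flux density is a sum of three products `f(r) g(θ)`, with `g`
constant or of the form `a cos θ + b sin θ`. Fubini splits the integral, and over the half-turn
`[γ, γ + π)` one has `∫ cos = -2 sin γ` and `∫ sin = 2 cos γ`. -/

theorem injOn_polarCoord_symm (a : ℝ) :
    InjOn polarCoord.symm (Ioi 0 ×ˢ Ico a (a + 2 * π)) := by
  rintro ⟨r₁, θ₁⟩ ⟨hr₁, hθ₁⟩ ⟨r₂, θ₂⟩ ⟨hr₂, hθ₂⟩ heq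
  simp only [polarCoord_symm_apply, Prod.mk.injEq] at heq hr₁ hr₂ ⊢
  obtain ⟨hcos, hsin⟩ := heq
  have hr : r₁ = r₂ := by
    have : r₁ ^ 2 = r₂ ^ 2 := by
      have h₁ := sin_sq_add_cos_sq θ₁
      have h₂ := sin_sq_add_cos_sq θ₂
      linear_combination r₂ ^ 2 * h₂ - r₁ ^ 2 * h₁ + (r₁ * cos θ₁ + r₂ * cos θ₂) * hcos
        + (r₁ * sin θ₁ + r₂ * sin θ₂) * hsin
    exact (pow_left_inj₀ hr₁.le hr₂.le two_ne_zero).1 this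
  subst hr
  have hangle : (θ₁ : Real.Angle) = θ₂ :=
    Real.Angle.cos_sin_inj (mul_left_cancel₀ hr₁.ne' hcos) (mul_left_cancel₀ hr₁.ne' hsin)
  have : Fact (0 < 2 * π) := ⟨two_pi_pos⟩
  exact ⟨rfl, (AddCircle.coe_eq_coe_iff_of_mem_Ico hθ₁ hθ₂).1 hangle⟩

theorem setIntegral_image_polarCoord_symm {E : Type*} [NormedAddCommGroup E] [NormedSpace ℝ E]
    (f : ℝ × ℝ → E) {s : Set (ℝ × ℝ)} {a : ℝ} (hs : MeasurableSet s)
    (hsub : s ⊆ Ioi 0 ×ˢ Ico a (a + 2 * π)) :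
    ∫ q in polarCoord.symm '' s, f q = ∫ p in s, p.1 • f (polarCoord.symm p) := by
  rw [integral_image_eq_integral_abs_det_fderiv_smul volume hs
    (fun p _ ↦ (hasFDerivAt_polarCoord_symm p).hasFDerivWithinAt)
    ((injOn_polarCoord_symm a).mono hsub)]
  refine setIntegral_congr_fun hs fun p hp ↦ ?_
  rw [det_fderivPolarCoordSymm, abs_of_pos (hsub hp).1]

def prodEquivE2 : (ℝ × ℝ) ≃ᵐ E2 :=
  MeasurableEquiv.finTwoArrow.symm.trans (MeasurableEquiv.toLp 2 (Fin 2 → ℝ))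

theorem measurePreserving_prodEquivE2 : MeasurePreserving prodEquivE2 :=
  ((EuclideanSpace.volume_preserving_symm_measurableEquiv_toLp (Fin 2)).symm _).comp
    ((volume_preserving_finTwoArrow ℝ).symm _)

theorem halfDisc_eq_image (ρ γ : ℝ) :
    halfDisc ρ γ = prodEquivE2 '' (polarCoord.symm '' (Ioo 0 ρ ×ˢ Ico γ (π + γ))) := by
  ext y
  constructor
  · rintro ⟨r, θ, hr₀, hrρ, hγθ, hθπ, rfl⟩
    exact ⟨_, ⟨(r, θ), ⟨⟨hr₀, hrρ⟩, hγθ, hθπ⟩, rfl⟩, rfl⟩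
  · rintro ⟨-, ⟨⟨r, θ⟩, ⟨⟨hr₀, hrρ⟩, hγθ, hθπ⟩, rfl⟩, rfl⟩
    exact ⟨r, θ, hr₀, hrρ, hγθ, hθπ, rfl⟩

theorem integral_halfDisc_eq_polar {E : Type*} [NormedAddCommGroup E] [NormedSpace ℝ E]
    (f : E2 → E) (ρ γ : ℝ) :
    ∫ y in halfDisc ρ γ, f y =
      ∫ p in Ioo 0 ρ ×ˢ Ico γ (π + γ), p.1 • f (mk2 (p.1 * cos p.2) (p.1 * sin p.2)) := by
  rw [halfDisc_eq_image, measurePreserving_prodEquivE2.setIntegral_image_emb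
    prodEquivE2.measurableEmbedding]
  refine setIntegral_image_polarCoord_symm (a := γ) _ (measurableSet_Ioo.prod measurableSet_Ico) ?_
  exact prod_mono Ioo_subset_Ioi_self (Ico_subset_Ico_right (by linarith [pi_pos]))

def powerCupFluxDensity (α k h : ℝ) (uP ω : V3) (y : E2) : ℝ :=
  let u := rigidAt uP ω h (mk3 (y 0) (y 1) (h + k * ‖y‖ ^ (1 + α)))
  u 2 - u 0 * (k * (1 + α) * ‖y‖ ^ (α - 1) * y 0) - u 1 * (k * (1 + α) * ‖y‖ ^ (α - 1) * y 1)

theorem norm_mk2_polar {r : ℝ} (θ : ℝ) (hr : 0 ≤ r) : ‖mk2 (r * cos θ) (r * sin θ)‖ = r := by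
  rw [EuclideanSpace.norm_eq, Fin.sum_univ_two]
  simp only [mk2, WithLp.equiv_symm_apply, PiLp.toLp_apply, Matrix.cons_val_zero,
    Matrix.cons_val_one, Real.norm_eq_abs, sq_abs]
  rw [show (r * cos θ) ^ 2 + (r * sin θ) ^ 2 = r ^ 2 by
    linear_combination r ^ 2 * cos_sq_add_sin_sq θ, Real.sqrt_sq hr]

theorem powerCupFluxDensity_polar (α k h : ℝ) (uP ω : V3) {r : ℝ} (θ : ℝ) (hr : 0 < r) :
    r * powerCupFluxDensity α k h uP ω (mk2 (r * cos θ) (r * sin θ)) =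
      r * uP 2 + (r ^ 2 + k ^ 2 * (1 + α) * r ^ (2 * α + 2)) * (-ω 1 * cos θ + ω 0 * sin θ)
        + k * (1 + α) * r ^ (1 + α) * (-uP 0 * cos θ + -uP 1 * sin θ) := by
  have h_one_add : r ^ (1 + α) = r * r ^ α := by rw [rpow_add hr, rpow_one]
  have h_two_mul_add : r ^ (2 * α + 2) = r ^ α * r ^ α * r ^ 2 := by
    rw [show 2 * α + 2 = α + α + 2 by ring, rpow_add hr, rpow_add hr, rpow_two]
  have h_sub_one : r ^ (α - 1) = r ^ α / r := by rw [rpow_sub hr, rpow_one]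
  simp only [powerCupFluxDensity, norm_mk2_polar θ hr.le]
  simp only [rigidAt, cross3, mk3, mk2, WithLp.equiv_symm_apply, PiLp.add_apply, PiLp.sub_apply,
    Matrix.cons_val_zero, Matrix.cons_val_one, Matrix.cons_val_fin_one, Matrix.cons_val,
    add_sub_cancel_left, sub_zero]
  rw [h_one_add, h_two_mul_add, h_sub_one]
  field_simp
  ring

theorem setIntegral_prod_mul_add_mul_add_mul {X Y : Type*} [MeasurableSpace X]
    [MeasurableSpace Y] {μ : Measure X} {ν : Measure Y} [SigmaFinite μ] [SigmaFinite ν]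
    {s : Set X} {t : Set Y} {f₁ f₂ f₃ : X → ℝ} {g₁ g₂ g₃ : Y → ℝ}
    (hf₁ : IntegrableOn f₁ s μ) (hf₂ : IntegrableOn f₂ s μ) (hf₃ : IntegrableOn f₃ s μ)
    (hg₁ : IntegrableOn g₁ t ν) (hg₂ : IntegrableOn g₂ t ν) (hg₃ : IntegrableOn g₃ t ν) :
    ∫ p in s ×ˢ t, f₁ p.1 * g₁ p.2 + f₂ p.1 * g₂ p.2 + f₃ p.1 * g₃ p.2 ∂μ.prod ν =
      (∫ x in s, f₁ x ∂μ) * (∫ y in t, g₁ y ∂ν) + (∫ x in s, f₂ x ∂μ) * (∫ y in t, g₂ y ∂ν)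
        + (∫ x in s, f₃ x ∂μ) * ∫ y in t, g₃ y ∂ν := by
  have hprod {f : X → ℝ} {g : Y → ℝ} (hf : IntegrableOn f s μ) (hg : IntegrableOn g t ν) :
      IntegrableOn (fun p ↦ f p.1 * g p.2) (s ×ˢ t) (μ.prod ν) := by
    rw [IntegrableOn, ← Measure.prod_restrict]
    exact hf.mul_prod hg
  have h₁₂ : IntegrableOn (fun p ↦ f₁ p.1 * g₁ p.2 + f₂ p.1 * g₂ p.2) (s ×ˢ t) (μ.prod ν) :=
    (hprod hf₁ hg₁).add (hprod hf₂ hg₂)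
  rw [integral_add h₁₂ (hprod hf₃ hg₃), integral_add (hprod hf₁ hg₁) (hprod hf₂ hg₂),
    setIntegral_prod_mul, setIntegral_prod_mul, setIntegral_prod_mul]

theorem integral_Ico_half_turn (a b γ : ℝ) :
    ∫ θ in Ico γ (π + γ), a * cos θ + b * sin θ = 2 * (b * cos γ - a * sin γ) := by
  rw [integral_Ico_eq_integral_Ioo, ← integral_Ioc_eq_integral_Ioo,
    ← intervalIntegral.integral_of_le (by linarith [pi_pos]),
    intervalIntegral.integral_add
      ((by fun_prop : Continuous fun θ ↦ a * cos θ).intervalIntegrable _ _)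
      ((by fun_prop : Continuous fun θ ↦ b * sin θ).intervalIntegrable _ _),
    intervalIntegral.integral_const_mul, intervalIntegral.integral_const_mul, integral_cos,
    integral_sin, sin_add, cos_add, sin_pi, cos_pi]
  ring

theorem integral_Ioo_eq_intervalIntegral {f : ℝ → ℝ} {ρ : ℝ} (hρ : 0 ≤ ρ) :
    ∫ r in Ioo 0 ρ, f r = ∫ r in (0)..ρ, f r := by
  rw [← integral_Ioc_eq_integral_Ioo, intervalIntegral.integral_of_le hρ]

theorem integral_Ioo_mul_rpow (c : ℝ) {ρ p : ℝ} (hρ : 0 ≤ ρ) (hp : -1 < p) :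
    ∫ r in Ioo 0 ρ, c * r ^ p = c * (ρ ^ (p + 1) / (p + 1)) := by
  rw [integral_Ioo_eq_intervalIntegral hρ, intervalIntegral.integral_const_mul,
    integral_rpow (Or.inl hp), zero_rpow (by linarith), sub_zero]

theorem integral_Ioo_sq_add_mul_rpow (c : ℝ) {ρ p : ℝ} (hρ : 0 ≤ ρ) (hp : -1 < p) :
    ∫ r in Ioo 0 ρ, (r ^ 2 + c * r ^ p) = ρ ^ 3 / 3 + c * (ρ ^ (p + 1) / (p + 1)) := by
  have hsq : IntegrableOn (fun r : ℝ ↦ r ^ 2) (Ioo 0 ρ) :=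
    (continuous_pow 2).integrableOn_Icc.mono_set Ioo_subset_Icc_self
  have hrpow : IntegrableOn (fun r : ℝ ↦ r ^ p) (Ioo 0 ρ) :=
    (intervalIntegral.intervalIntegrable_rpow' hp).1.mono_set Ioo_subset_Ioc_self
  rw [integral_add hsq (hrpow.const_mul c), integral_Ioo_mul_rpow c hρ hp,
    integral_Ioo_eq_intervalIntegral hρ, integral_pow]
  norm_num

theorem flux_rigid_power_cup_general
    (α k h ρ γ : ℝ) (uP ω : V3) (hα₀ : 0 < α) (hρ : 0 < ρ) :
    (∫ y in halfDisc ρ γ,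
        ((rigidAt uP ω h (mk3 (y 0) (y 1) (h + k * ‖y‖ ^ (1 + α)))) 2 -
          (rigidAt uP ω h (mk3 (y 0) (y 1) (h + k * ‖y‖ ^ (1 + α)))) 0 *
            (k * (1 + α) * ‖y‖ ^ (α - 1) * y 0) -
          (rigidAt uP ω h (mk3 (y 0) (y 1) (h + k * ‖y‖ ^ (1 + α)))) 1 *
            (k * (1 + α) * ‖y‖ ^ (α - 1) * y 1))) =
      Real.pi / 2 * ρ ^ 2 * uP 2 +
        2 * k * (1 + α) / (2 + α) * ρ ^ (2 + α) * (uP 0 * Real.sin γ - uP 1 * Real.cos γ) +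
        (2 / 3 + 2 * k ^ 2 * (1 + α) / (2 * α + 3) * ρ ^ (2 * α)) * ρ ^ 3 *
          (ω 0 * Real.cos γ + ω 1 * Real.sin γ) := by
  have hIoo {f : ℝ → ℝ} (hf : Continuous f) : IntegrableOn f (Ioo 0 ρ) :=
    hf.integrableOn_Icc.mono_set Ioo_subset_Icc_self
  have hIco {g : ℝ → ℝ} (hg : Continuous g) : IntegrableOn g (Ico γ (π + γ)) :=
    hg.integrableOn_Icc.mono_set Ico_subset_Icc_self
  calc _ = ∫ p in Ioo 0 ρ ×ˢ Ico γ (π + γ),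
          p.1 • powerCupFluxDensity α k h uP ω (mk2 (p.1 * cos p.2) (p.1 * sin p.2)) :=
        integral_halfDisc_eq_polar _ ρ γ
    _ = ∫ p in Ioo 0 ρ ×ˢ Ico γ (π + γ), p.1 * uP 2
          + (p.1 ^ 2 + k ^ 2 * (1 + α) * p.1 ^ (2 * α + 2)) * (-ω 1 * cos p.2 + ω 0 * sin p.2)
          + k * (1 + α) * p.1 ^ (1 + α) * (-uP 0 * cos p.2 + -uP 1 * sin p.2) :=
        setIntegral_congr_fun (measurableSet_Ioo.prod measurableSet_Ico) fun p hp ↦ by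
          rw [smul_eq_mul, powerCupFluxDensity_polar _ _ _ _ _ _ hp.1.1]
    _ = (∫ r in Ioo 0 ρ, r) * (∫ _ in Ico γ (π + γ), uP 2)
          + (∫ r in Ioo 0 ρ, r ^ 2 + k ^ 2 * (1 + α) * r ^ (2 * α + 2))
            * (∫ θ in Ico γ (π + γ), -ω 1 * cos θ + ω 0 * sin θ)
          + (∫ r in Ioo 0 ρ, k * (1 + α) * r ^ (1 + α))
            * ∫ θ in Ico γ (π + γ), -uP 0 * cos θ + -uP 1 * sin θ := by
      rw [Measure.volume_eq_prod]
      exact setIntegral_prod_mul_add_mul_add_mul (f₁ := fun r ↦ r)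
        (f₂ := fun r ↦ r ^ 2 + k ^ 2 * (1 + α) * r ^ (2 * α + 2))
        (f₃ := fun r ↦ k * (1 + α) * r ^ (1 + α)) (g₁ := fun _ ↦ uP 2)
        (g₂ := fun θ ↦ -ω 1 * cos θ + ω 0 * sin θ) (g₃ := fun θ ↦ -uP 0 * cos θ + -uP 1 * sin θ)
        (hIoo (by fun_prop)) (hIoo (by fun_prop (disch := positivity)))
        (hIoo (by fun_prop (disch := positivity))) (hIco (by fun_prop)) (hIco (by fun_prop))
        (hIco (by fun_prop))
    _ = _ := by
      rw [integral_Ioo_sq_add_mul_rpow _ hρ.le (by linarith),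
        integral_Ioo_mul_rpow _ hρ.le (by linarith), integral_Ico_half_turn,
        integral_Ico_half_turn, integral_Ioo_eq_intervalIntegral hρ.le, integral_id,
        setIntegral_const, Real.volume_real_Ico, add_sub_cancel_right, max_eq_left pi_pos.le,
        smul_eq_mul, show 2 * α + 2 + 1 = 2 * α + (3 : ℕ) by push_cast; ring, rpow_add hρ,
        rpow_natCast, show 1 + α + 1 = 2 + α by ring]
      field_simp
      ring

/-- Flux of a rigid field through the power-cup graph `x₃ = h + k|x'|^{1+α}`
over a half-disc; the gradient of the graph function is
`∇g(x') = k (1+α) |x'|^{α-1} x'`. -/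
theorem flux_rigid_power_cup
    (α k h ρ γ : ℝ) (uP ω : V3) (hα₀ : 0 < α) (hα₁ : α ≤ 1) (hk : 0 < k) (hρ : 0 < ρ) :
    (∫ y in halfDisc ρ γ,
        ((rigidAt uP ω h (mk3 (y 0) (y 1) (h + k * ‖y‖ ^ (1 + α)))) 2 -
          (rigidAt uP ω h (mk3 (y 0) (y 1) (h + k * ‖y‖ ^ (1 + α)))) 0 *
            (k * (1 + α) * ‖y‖ ^ (α - 1) * y 0) -
          (rigidAt uP ω h (mk3 (y 0) (y 1) (h + k * ‖y‖ ^ (1 + α)))) 1 *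
            (k * (1 + α) * ‖y‖ ^ (α - 1) * y 1))) =
      Real.pi / 2 * ρ ^ 2 * uP 2 +
        2 * k * (1 + α) / (2 + α) * ρ ^ (2 + α) * (uP 0 * Real.sin γ - uP 1 * Real.cos γ) +
        (2 / 3 + 2 * k ^ 2 * (1 + α) / (2 * α + 3) * ρ ^ (2 * α)) * ρ ^ 3 *
          (ω 0 * Real.cos γ + ω 1 * Real.sin γ) :=
  flux_rigid_power_cup_general α k h ρ γ uP ω hα₀ hρ
end
end

section
/- (Near-flatness of the flux of a rigid field through a C³ graph.) Let K ≥ 1 and σ₀ > 0, and let g : ℝ² → ℝ be C³ on the disc {|x'| < σ₀} with |∇^i g(x')| ≤ K|x'|^{2−i} for i = 0,1,2 and |∇³ g(x')| ≤ K on {|x'| < σ₀} (in particular g(0) = 0 and ∇g(0) = 0). Then there exists a constant C(K) > 0 depending only on K such that for every h ∈ ℝ, every u_P = (u_{P1},u_{P2},u_{P3}) ∈ ℝ³, every ω = (ω₁,ω₂,ω₃) ∈ ℝ³ and every ρ ∈ (0, σ₀): the rigid field u(x) := u_P + ω × (x − (0,0,h)) satisfies | ∫_{|x'|<ρ} u(x',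 h + g(x')) · (−∂_{x₁}g(x'), −∂_{x₂}g(x'), 1) dx' − πρ² u_{P3} | ≤ C(K) ( |u_{Pτ}| + |ω_τ| ρ ) ρ⁴, where u_{Pτ} := (u_{P1},u_{P2},0) and ω_τ := (ω₁,ω₂,0). -/
noncomputable section

open MeasureTheory Real Set Filter
open scoped RealInnerProductSpace

/-!
The flux integrand of the rigid field through the graph splits as `u_{P3}`, plus
`⟪ω'^⊥, y⟫ - ∇g(y)·u_P' + g(y) ∇g(y)·ω'^⊥` (with `x'` the horizontal part of `x` and `⊥` the
rotation by `π/2`), minus `ω₃ ∇g(y)·y^⊥`.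
The last term integrates to zero over the disc: it is the derivative at `θ = 0` of
`θ ↦ ∫_{|y|<ρ} g(R_θ y) dy`, which does not depend on `θ`. In the middle term, the linear parts
`⟪ω'^⊥, y⟫` and `∇²g(0)(y, u_P')` integrate to zero by oddness, and what is left is pointwise
`O(K ρ² |u_P'| + K² ρ³ |ω'|)`: Taylor's formula for `∇g` with `∇g(0) = 0` and `|∇³g| ≤ K`,
and `|g| ≤ K ρ²`, `|∇g| ≤ K ρ`. Integrating over a disc of area `π ρ²` gives the bound.
-/

open Metric

section NormedSpace

variable {E F : Type*} [NormedAddCommGroup E] [NormedSpace ℝ E]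
  [NormedAddCommGroup F] [NormedSpace ℝ F]

theorem norm_image_sub_sub_fderiv_le_of_norm_iteratedFDeriv_two_le {f : E → F} {r K : ℝ}
    (hf : ContDiffOn ℝ 2 f (ball 0 r)) (hK : ∀ z ∈ ball 0 r, ‖iteratedFDeriv ℝ 2 f z‖ ≤ K)
    {y : E} (hy : y ∈ ball 0 r) :
    ‖f y - f 0 - fderiv ℝ f 0 y‖ ≤ K * ‖y‖ ^ 2 := by
  have h0 : (0 : E) ∈ ball 0 r := mem_ball_self (pos_of_mem_ball hy)
  have hK0 : 0 ≤ K := (norm_nonneg _).trans (hK 0 h0)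
  have hdiff : ∀ z ∈ ball (0 : E) r, DifferentiableAt ℝ f z := fun z hz =>
    (hf.contDiffAt (isOpen_ball.mem_nhds hz)).differentiableAt (by norm_num)
  have hdiff' : ∀ z ∈ ball (0 : E) r, DifferentiableAt ℝ (fderiv ℝ f) z := fun z hz =>
    ((hf.fderiv_of_isOpen isOpen_ball (m := 1) (by norm_num)).contDiffAt
      (isOpen_ball.mem_nhds hz)).differentiableAt (by norm_num)
  have hD : ∀ z ∈ ball (0 : E) r, ‖fderiv ℝ f z - fderiv ℝ f 0‖ ≤ K * ‖z‖ := fun z hz => by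
    simpa using (convex_ball (0 : E) r).norm_image_sub_le_of_norm_fderiv_le hdiff'
      (fun w hw => by rw [← norm_iteratedFDeriv_one, norm_iteratedFDeriv_fderiv]; exact hK w hw)
      h0 hz
  have hsub : closedBall (0 : E) ‖y‖ ⊆ ball 0 r := closedBall_subset_ball (by simpa using hy)
  have := (convex_closedBall (0 : E) ‖y‖).norm_image_sub_le_of_norm_fderiv_le'
    (fun z hz => hdiff z (hsub hz))
    (fun z hz => (hD z (hsub hz)).trans
      (mul_le_mul_of_nonneg_left (mem_closedBall_zero_iff.1 hz) hK0))
    (mem_closedBall_self (norm_nonneg y)) (mem_closedBall_zero_iff.2 le_rfl)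
  simpa [sq, mul_assoc] using this

end NormedSpace

section InnerProductSpace

variable {E F : Type*} [NormedAddCommGroup E] [InnerProductSpace ℝ E] [FiniteDimensional ℝ E]
  [MeasurableSpace E] [BorelSpace E] [NormedAddCommGroup F]

theorem integrableOn_ball_of_continuousOn_ball {f : E → F} {ρ σ : ℝ} (hρσ : ρ < σ)
    (hf : ContinuousOn f (ball 0 σ)) : IntegrableOn f (ball 0 ρ) :=
  ((hf.mono (closedBall_subset_ball hρσ)).integrableOn_compact
    (isCompact_closedBall 0 ρ)).mono_set ball_subset_closedBall

variable [NormedSpace ℝ F]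

theorem setIntegral_ball_comp_linearIsometryEquiv (T : E ≃ₗᵢ[ℝ] E) (f : E → F) (r : ℝ) :
    ∫ y in ball 0 r, f (T y) = ∫ y in ball 0 r, f y := by
  have hball : T ⁻¹' ball 0 r = ball 0 r := by ext y; simp
  simpa only [hball] using
    T.measurePreserving.setIntegral_preimage_emb T.toHomeomorph.measurableEmbedding f (ball 0 r)

theorem setIntegral_ball_clm_eq_zero (L : E →L[ℝ] F) (r : ℝ) :
    ∫ y in ball 0 r, L y = 0 := by
  have h := setIntegral_ball_comp_linearIsometryEquiv (LinearIsometryEquiv.neg ℝ) L r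
  rw [LinearIsometryEquiv.coe_neg] at h
  simp only [map_neg, integral_neg, neg_eq_iff_add_eq_zero, ← two_smul ℝ] at h
  exact (smul_eq_zero.1 h).resolve_left two_ne_zero

theorem norm_setIntegral_ball_le_of_norm_sub_clm_le {f : E → F} (L : E →L[ℝ] F) {r M : ℝ}
    (hf : IntegrableOn f (ball 0 r)) (hM : ∀ y ∈ ball 0 r, ‖f y - L y‖ ≤ M) :
    ‖∫ y in ball 0 r, f y‖ ≤ M * volume.real (ball (0 : E) r) := by
  have hL : IntegrableOn L (ball 0 r) :=
    (L.continuous.continuousOn.integrableOn_compact (isCompact_closedBall 0 r)).mono_set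
      ball_subset_closedBall
  have hsplit : ∫ y in ball 0 r, f y = ∫ y in ball 0 r, (f y - L y) := by
    rw [integral_sub hf hL, setIntegral_ball_clm_eq_zero, sub_zero]
  rw [hsplit]
  exact norm_setIntegral_le_of_norm_le_const measure_ball_lt_top hM

theorem setIntegral_ball_fderiv_apply_generator_eq_zero (R : ℝ → E ≃ₗᵢ[ℝ] E) (A : E →L[ℝ] E)
    (hR₀ : ∀ y, R 0 y = y) (hR : ∀ t y, HasDerivAt (fun s => R s y) (A (R t y)) t)
    {g : E → ℝ} {ρ σ : ℝ} (hg : ContDiffOn ℝ 1 g (ball 0 σ)) (hρσ : ρ < σ) :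
    ∫ y in ball 0 ρ, fderiv ℝ g y (A y) = 0 := by
  have hsub : closedBall (0 : E) ρ ⊆ ball 0 σ := closedBall_subset_ball hρσ
  have hDg : ContinuousOn (fderiv ℝ g) (ball 0 σ) :=
    hg.continuousOn_fderiv_of_isOpen isOpen_ball le_rfl
  obtain ⟨M, hM⟩ := (isCompact_closedBall (0 : E) ρ).exists_bound_of_continuousOn (hDg.mono hsub)
  have hRball : ∀ t, ∀ y ∈ ball (0 : E) ρ, R t y ∈ ball (0 : E) ρ := fun t y hy => by simpa using hy
  have hRσ : ∀ t, ∀ y ∈ ball (0 : E) ρ, R t y ∈ ball (0 : E) σ := fun t y hy =>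
    hsub (ball_subset_closedBall (hRball t y hy))
  set F' : ℝ → E → ℝ := fun t y => fderiv ℝ g (R t y) (A (R t y)) with hF'
  have hderiv : ∀ t, ∀ y ∈ ball (0 : E) ρ, HasDerivAt (fun s => g (R s y)) (F' t y) t :=
    fun t y hy => ((hg.contDiffAt (isOpen_ball.mem_nhds (hRσ t y hy))).differentiableAt
      one_ne_zero).hasFDerivAt.comp_hasDerivAt t (hR t y)
  have hbound : ∀ t, ∀ y ∈ ball (0 : E) ρ, ‖F' t y‖ ≤ M * (‖A‖ * ρ) := fun t y hy => by
    have hy' : ‖R t y‖ ≤ ρ := mem_closedBall_zero_iff.1 (ball_subset_closedBall (hRball t y hy))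
    calc ‖F' t y‖ ≤ ‖fderiv ℝ g (R t y)‖ * ‖A (R t y)‖ := (fderiv ℝ g (R t y)).le_opNorm _
      _ ≤ M * (‖A‖ * ρ) := by
        gcongr
        · exact (norm_nonneg _).trans (hM 0 (mem_closedBall_self ((norm_nonneg _).trans hy')))
        · exact hM _ (ball_subset_closedBall (hRball t y hy))
        · exact A.le_opNorm_of_le hy'
  have hF'₀ : F' 0 = fun y => fderiv ℝ g y (A y) := by simp only [hF', hR₀]
  obtain ⟨-, hD⟩ := hasDerivAt_integral_of_dominated_loc_of_deriv_le
    (μ := volume.restrict (ball 0 ρ)) (F := fun t y => g (R t y)) (x₀ := 0) univ_mem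
    (Eventually.of_forall fun t => ((hg.continuousOn.mono (ball_subset_closedBall.trans hsub)).comp
      (R t).continuous.continuousOn (hRball t)).aestronglyMeasurable measurableSet_ball)
    (by simp only [hR₀]; exact integrableOn_ball_of_continuousOn_ball hρσ hg.continuousOn)
    (by rw [hF'₀]; exact ((hDg.clm_apply A.continuous.continuousOn).mono
      (ball_subset_closedBall.trans hsub)).aestronglyMeasurable measurableSet_ball)
    (ae_restrict_of_forall_mem measurableSet_ball fun y hy t _ => hbound t y hy)
    (integrableOn_const measure_ball_lt_top.ne)
    (ae_restrict_of_forall_mem measurableSet_ball fun y hy t _ => hderiv t y hy)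
  have hconst : (fun t => ∫ y in ball 0 ρ, g (R t y)) = fun _ => ∫ y in ball 0 ρ, g y :=
    funext fun t => setIntegral_ball_comp_linearIsometryEquiv (R t) g ρ
  rw [hconst, hF'₀] at hD
  exact hD.unique (hasDerivAt_const 0 _)

theorem abs_setIntegral_ball_clm_sub_fderiv_add_mul_fderiv_le (ℓ : E →L[ℝ] ℝ) (v w : E)
    {g : E → ℝ} {ρ σ K : ℝ} (hg : ContDiffOn ℝ 3 g (ball 0 σ)) (hρσ : ρ < σ)
    (hg0 : ∀ y ∈ ball (0 : E) σ, |g y| ≤ K * ‖y‖ ^ 2)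
    (hg1 : ∀ y ∈ ball (0 : E) σ, ‖fderiv ℝ g y‖ ≤ K * ‖y‖)
    (hg3 : ∀ y ∈ ball (0 : E) σ, ‖iteratedFDeriv ℝ 3 g y‖ ≤ K) :
    |∫ y in ball 0 ρ, (ℓ y - fderiv ℝ g y v + g y * fderiv ℝ g y w)| ≤
      K * ρ ^ 2 * (‖v‖ + K * ρ * ‖w‖) * volume.real (ball (0 : E) ρ) := by
  have hDg : ContDiffOn ℝ 2 (fderiv ℝ g) (ball 0 σ) :=
    hg.fderiv_of_isOpen isOpen_ball (by norm_num)
  have hint : IntegrableOn (fun y => ℓ y - fderiv ℝ g y v + g y * fderiv ℝ g y w) (ball 0 ρ) :=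
    integrableOn_ball_of_continuousOn_ball hρσ <|
      (ℓ.continuous.continuousOn.sub (hDg.continuousOn.clm_apply continuousOn_const)).add
        (hg.continuousOn.mul (hDg.continuousOn.clm_apply continuousOn_const))
  rw [← Real.norm_eq_abs]
  refine norm_setIntegral_ball_le_of_norm_sub_clm_le
    (ℓ - (fderiv ℝ (fderiv ℝ g) 0).flip v) hint fun y hy => ?_
  have hyσ : y ∈ ball (0 : E) σ := ball_subset_ball hρσ.le hy
  have hy : ‖y‖ ≤ ρ := (mem_ball_zero_iff.1 hy).le
  have h0 : (0 : E) ∈ ball (0 : E) σ := mem_ball_self (pos_of_mem_ball hyσ)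
  have hK : 0 ≤ K := (norm_nonneg _).trans (hg3 0 h0)
  have hDg0 : fderiv ℝ g 0 = 0 := norm_le_zero_iff.1 (by simpa using hg1 0 h0)
  have htaylor : ‖fderiv ℝ g y - fderiv ℝ (fderiv ℝ g) 0 y‖ ≤ K * ‖y‖ ^ 2 := by
    simpa [hDg0] using norm_image_sub_sub_fderiv_le_of_norm_iteratedFDeriv_two_le hDg
      (fun z hz => by rw [norm_iteratedFDeriv_fderiv]; exact hg3 z hz) hyσ
  have hsplit : ℓ y - fderiv ℝ g y v + g y * fderiv ℝ g y w
      - (ℓ - (fderiv ℝ (fderiv ℝ g) 0).flip v) y =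
      -(fderiv ℝ g y - fderiv ℝ (fderiv ℝ g) 0 y) v + g y * fderiv ℝ g y w := by
    simp only [sub_apply, ContinuousLinearMap.flip_apply]
    ring
  rw [hsplit]
  calc ‖-(fderiv ℝ g y - fderiv ℝ (fderiv ℝ g) 0 y) v + g y * fderiv ℝ g y w‖
      ≤ ‖fderiv ℝ g y - fderiv ℝ (fderiv ℝ g) 0 y‖ * ‖v‖ + |g y| * (‖fderiv ℝ g y‖ * ‖w‖) := by
        refine (norm_add_le _ _).trans (add_le_add ?_ ?_)
        · rw [norm_neg]; exact ContinuousLinearMap.le_opNorm _ _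
        · rw [norm_mul, Real.norm_eq_abs]
          exact mul_le_mul_of_nonneg_left (ContinuousLinearMap.le_opNorm _ _) (abs_nonneg _)
    _ ≤ K * ‖y‖ ^ 2 * ‖v‖ + K * ‖y‖ ^ 2 * (K * ‖y‖ * ‖w‖) := by
        gcongr
        · exact hg0 y hyσ
        · exact hg1 y hyσ
    _ ≤ K * ρ ^ 2 * ‖v‖ + K * ρ ^ 2 * (K * ρ * ‖w‖) := by gcongr
    _ = K * ρ ^ 2 * (‖v‖ + K * ρ * ‖w‖) := by ring

end InnerProductSpace
def planeRotation (θ : ℝ) : E2 ≃ₗᵢ[ℝ] E2 :=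
  Complex.orthonormalBasisOneI.repr.symm.trans
    ((rotation (Circle.exp θ)).trans Complex.orthonormalBasisOneI.repr)

theorem planeRotation_apply (θ : ℝ) (y : E2) :
    planeRotation θ y = Complex.orthonormalBasisOneI.repr
      (Complex.exp (θ * Complex.I) * Complex.orthonormalBasisOneI.repr.symm y) := rfl

theorem planeRotation_zero_apply (y : E2) : planeRotation 0 y = y := by
  simp only [planeRotation_apply, Complex.ofReal_zero, zero_mul, Complex.exp_zero, one_mul,
    LinearIsometryEquiv.apply_symm_apply]

theorem hasDerivAt_planeRotation (t : ℝ) (y : E2) :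
    HasDerivAt (fun s => planeRotation s y) (planeRotation (π / 2) (planeRotation t y)) t := by
  have hexp : HasDerivAt (fun s : ℝ => Complex.exp (s * Complex.I))
      (Complex.exp (t * Complex.I) * (1 * Complex.I)) t :=
    ((hasDerivAt_id t).ofReal_comp.mul_const Complex.I).cexp
  have := (Complex.orthonormalBasisOneI.repr.toContinuousLinearEquiv : ℂ →L[ℝ] E2).hasFDerivAt
    |>.comp_hasDerivAt t (hexp.mul_const (Complex.orthonormalBasisOneI.repr.symm y))
  refine this.congr_deriv ?_
  simp only [planeRotation_apply, LinearIsometryEquiv.symm_apply_apply,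
    Complex.ofReal_div, Complex.ofReal_ofNat, Complex.exp_pi_div_two_mul_I]
  exact congrArg Complex.orthonormalBasisOneI.repr (by ring)

theorem planeRotation_pi_div_two_apply (y : E2) :
    planeRotation (π / 2) y = mk2 (-y 1) (y 0) := by
  ext i
  fin_cases i <;> simp [planeRotation_apply, Complex.exp_pi_div_two_mul_I, mk2]

def horizontalPart (x : V3) : E2 := mk2 (x 0) (x 1)

theorem norm_horizontalPart (x : V3) : ‖horizontalPart x‖ = pnorm x := by
  simp [horizontalPart, pnorm, mk2, EuclideanSpace.norm_eq, Fin.sum_univ_two]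

theorem volume_real_ball_fin_two {ρ : ℝ} (hρ : 0 ≤ ρ) :
    volume.real (ball (0 : E2) ρ) = π * ρ ^ 2 := by
  rw [measureReal_def, EuclideanSpace.volume_ball_fin_two, ENNReal.toReal_mul,
    ENNReal.toReal_pow, ENNReal.toReal_ofReal hρ, ENNReal.toReal_ofReal pi_nonneg, mul_comm]

theorem clm_apply_eq_fin_two (D : E2 →L[ℝ] ℝ) (v : E2) :
    D v = v 0 * D (EuclideanSpace.single 0 1) + v 1 * D (EuclideanSpace.single 1 1) := by
  conv_lhs => rw [← (EuclideanSpace.basisFun (Fin 2) ℝ).sum_repr v]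
  simp [Fin.sum_univ_two]

theorem rigidAt_graph_flux_integrand_eq (uP ω : V3) (h z : ℝ) (y : E2) (D : E2 →L[ℝ] ℝ) :
    rigidAt uP ω h (mk3 (y 0) (y 1) (h + z)) 2 -
      rigidAt uP ω h (mk3 (y 0) (y 1) (h + z)) 0 * D (EuclideanSpace.single 0 1) -
      rigidAt uP ω h (mk3 (y 0) (y 1) (h + z)) 1 * D (EuclideanSpace.single 1 1) =
    uP 2 + (⟪planeRotation (π / 2) (horizontalPart ω), y⟫ - D (horizontalPart uP) +
      z * D (planeRotation (π / 2) (horizontalPart ω))) - ω 2 * D (planeRotation (π / 2) y) := by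
  rw [clm_apply_eq_fin_two D (horizontalPart uP), clm_apply_eq_fin_two D (planeRotation _ _),
    clm_apply_eq_fin_two D (planeRotation _ y)]
  simp only [rigidAt, cross3, mk3, mk2, horizontalPart, planeRotation_pi_div_two_apply,
    WithLp.equiv_symm_apply, PiLp.add_apply, PiLp.sub_apply, Matrix.cons_val,
    Matrix.cons_val_zero, Matrix.cons_val_one, Matrix.cons_val_fin_one, add_sub_cancel_left,
    sub_zero, PiLp.inner_apply, RCLike.inner_apply, ringHom_apply, Fin.sum_univ_two]
  ring

theorem setIntegral_ball_fderiv_apply_planeRotation_eq_zero {g : E2 → ℝ} {ρ σ : ℝ}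
    (hg : ContDiffOn ℝ 1 g (ball 0 σ)) (hρσ : ρ < σ) :
    ∫ y in ball (0 : E2) ρ, fderiv ℝ g y (planeRotation (π / 2) y) = 0 :=
  setIntegral_ball_fderiv_apply_generator_eq_zero planeRotation
    (planeRotation (π / 2)).toContinuousLinearEquiv.toContinuousLinearMap
    planeRotation_zero_apply hasDerivAt_planeRotation hg hρσ

theorem setIntegral_graph_flux_rigidAt_eq {g : E2 → ℝ} {ρ σ : ℝ}
    (hg : ContDiffOn ℝ 1 g (ball 0 σ)) (hρ : 0 ≤ ρ) (hρσ : ρ < σ) (h : ℝ) (uP ω : V3) :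
    ∫ y in ball (0 : E2) ρ,
        ((rigidAt uP ω h (mk3 (y 0) (y 1) (h + g y))) 2 -
          (rigidAt uP ω h (mk3 (y 0) (y 1) (h + g y))) 0 *
            fderivWithin ℝ g (ball 0 σ) y (EuclideanSpace.single 0 1) -
          (rigidAt uP ω h (mk3 (y 0) (y 1) (h + g y))) 1 *
            fderivWithin ℝ g (ball 0 σ) y (EuclideanSpace.single 1 1)) =
      π * ρ ^ 2 * uP 2 +
        (∫ y in ball (0 : E2) ρ, (⟪planeRotation (π / 2) (horizontalPart ω), y⟫ -
          fderiv ℝ g y (horizontalPart uP) +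
          g y * fderiv ℝ g y (planeRotation (π / 2) (horizontalPart ω)))) -
        ω 2 * ∫ y in ball (0 : E2) ρ, fderiv ℝ g y (planeRotation (π / 2) y) := by
  have hDg := hg.continuousOn_fderiv_of_isOpen isOpen_ball le_rfl
  have htilt : IntegrableOn (fun y => ⟪planeRotation (π / 2) (horizontalPart ω), y⟫ -
      fderiv ℝ g y (horizontalPart uP) +
      g y * fderiv ℝ g y (planeRotation (π / 2) (horizontalPart ω))) (ball 0 ρ) :=
    integrableOn_ball_of_continuousOn_ball hρσ <|
      ((continuous_const.inner continuous_id).continuousOn.sub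
        (hDg.clm_apply continuousOn_const)).add
        (hg.continuousOn.mul (hDg.clm_apply continuousOn_const))
  have hspin : IntegrableOn (fun y => fderiv ℝ g y (planeRotation (π / 2) y)) (ball 0 ρ) :=
    integrableOn_ball_of_continuousOn_ball hρσ <|
      hDg.clm_apply (planeRotation (π / 2)).continuous.continuousOn
  rw [setIntegral_congr_fun measurableSet_ball fun y hy => by
      rw [rigidAt_graph_flux_integrand_eq,
        fderivWithin_of_isOpen isOpen_ball (ball_subset_ball hρσ.le hy)],
    integral_sub, integral_add, integral_const_mul,
    setIntegral_const, volume_real_ball_fin_two hρ, smul_eq_mul]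
  exacts [integrableOn_const measure_ball_lt_top.ne, htilt,
    (integrableOn_const measure_ball_lt_top.ne).add htilt, hspin.const_mul _]

/-- Near-flatness of the flux of a rigid field through a `C³` graph. -/
theorem flux_rigid_C3_graph_near_flat
    (K : ℝ) (hK : 1 ≤ K) :
    ∃ C : ℝ, 0 < C ∧
      ∀ (σ₀ : ℝ) (g : E2 → ℝ), 0 < σ₀ →
        ContDiffOn ℝ 3 g (Metric.ball 0 σ₀) →
        (∀ y ∈ Metric.ball (0 : E2) σ₀, |g y| ≤ K * ‖y‖ ^ 2) →
        (∀ y ∈ Metric.ball (0 : E2) σ₀,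
          ‖fderivWithin ℝ g (Metric.ball 0 σ₀) y‖ ≤ K * ‖y‖) →
        (∀ y ∈ Metric.ball (0 : E2) σ₀,
          ‖iteratedFDerivWithin ℝ 2 g (Metric.ball 0 σ₀) y‖ ≤ K) →
        (∀ y ∈ Metric.ball (0 : E2) σ₀,
          ‖iteratedFDerivWithin ℝ 3 g (Metric.ball 0 σ₀) y‖ ≤ K) →
        ∀ (h : ℝ) (uP ω : V3) (ρ : ℝ), 0 < ρ → ρ < σ₀ →
          |(∫ y in Metric.ball (0 : E2) ρ,
              ((rigidAt uP ω h (mk3 (y 0) (y 1) (h + g y))) 2 -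
                (rigidAt uP ω h (mk3 (y 0) (y 1) (h + g y))) 0 *
                  fderivWithin ℝ g (Metric.ball 0 σ₀) y (EuclideanSpace.single 0 1) -
                (rigidAt uP ω h (mk3 (y 0) (y 1) (h + g y))) 1 *
                  fderivWithin ℝ g (Metric.ball 0 σ₀) y (EuclideanSpace.single 1 1))) -
            Real.pi * ρ ^ 2 * uP 2| ≤
            C * (pnorm uP + pnorm ω * ρ) * ρ ^ 4 := by
  refine ⟨π * K ^ 2, by positivity, fun σ₀ g _ hg hg0 hg1 _ hg3 h uP ω ρ hρ hρσ => ?_⟩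
  have hg1' : ∀ y ∈ ball (0 : E2) σ₀, ‖fderiv ℝ g y‖ ≤ K * ‖y‖ := fun y hy => by
    simpa only [fderivWithin_of_isOpen isOpen_ball hy] using hg1 y hy
  have hg3' : ∀ y ∈ ball (0 : E2) σ₀, ‖iteratedFDeriv ℝ 3 g y‖ ≤ K := fun y hy => by
    simpa only [iteratedFDerivWithin_of_isOpen 3 isOpen_ball hy] using hg3 y hy
  have htilt := abs_setIntegral_ball_clm_sub_fderiv_add_mul_fderiv_le
    (innerSL ℝ (planeRotation (π / 2) (horizontalPart ω))) (horizontalPart uP)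
    (planeRotation (π / 2) (horizontalPart ω)) hg hρσ hg0 hg1' hg3'
  simp only [innerSL_apply_apply, LinearIsometryEquiv.norm_map, norm_horizontalPart,
    volume_real_ball_fin_two hρ.le] at htilt
  rw [setIntegral_graph_flux_rigidAt_eq (hg.of_le (by norm_num)) hρ.le hρσ,
    setIntegral_ball_fderiv_apply_planeRotation_eq_zero (hg.of_le (by norm_num)) hρσ,
    mul_zero, sub_zero, add_sub_cancel_left]
  have hu : 0 ≤ pnorm uP := Real.sqrt_nonneg _
  calc _ ≤ K * ρ ^ 2 * (pnorm uP + K * ρ * pnorm ω) * (π * ρ ^ 2) := htilt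
    _ = π * (K * pnorm uP + K ^ 2 * (pnorm ω * ρ)) * ρ ^ 4 := by ring
    _ ≤ π * (K ^ 2 * pnorm uP + K ^ 2 * (pnorm ω * ρ)) * ρ ^ 4 := by
        gcongr
        nlinarith
    _ = π * K ^ 2 * (pnorm uP + pnorm ω * ρ) * ρ ^ 4 := by ring
end
end
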